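/- If the minimum s-t cut in the importance-weighted flow graph T^f_{L,τ} is strictly less than τ·Σ_{v∈leaves(T)} f(v), then Ψ̂^f_T(L) < τ; moreover a witnessing set S ⊆ leaves(T)∖L with λ_T(S, leaves(T)∖S) < τ·Σ_{v∈S} f(v) can be obtained as S = S' ∩ leaves(T) for any s-side S' of a minimum cut. -/

import Mathlib

open Finset
open scoped ENNReal

/-- Weight of the (directed) cut leaving `S` in a graph with capacities `c`. -/
noncomputable def treeCutE {V : Type*} [Fintype V] [DecidableEq V] (c : V → V → ℝ≥0∞)
    (S : Finset V) : ℝ≥0∞ :=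
  ∑ u ∈ S, ∑ v ∈ Sᶜ, c u v

/-- `λ(A,B)`: minimum weight of a cut separating `A` from `B`. -/
noncomputable def lamE {V : Type*} [Fintype V] [DecidableEq V] (c : V → V → ℝ≥0∞)
    (A B : Finset V) : ℝ≥0∞ :=
  ⨅ S ∈ {S : Finset V | A ⊆ S ∧ Disjoint S B}, treeCutE c S

/-- `Ψ̂_T(L)` for the tree with edge weights `w` and leaf set `leaves`. -/
noncomputable def PsiHatE {V : Type*} [Fintype V] [DecidableEq V] (w : V → V → ℝ≥0∞)
    (leaves L : Finset V) : ℝ≥0∞ :=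
  ⨅ S ∈ {S : Finset V | S.Nonempty ∧ S ⊆ leaves \ L},
    lamE w S (leaves \ S) / (S.card : ℝ≥0∞)

/-- Capacities of the flow graph `T_{L,τ}`: all tree edges, an edge of capacity `τ` between
the source `s = Sum.inr true` and every leaf, and an edge of capacity `∞` between every
vertex of `L` and the sink `t = Sum.inr false`. -/
noncomputable def flowW {V : Type*} [DecidableEq V] (w : V → V → ℝ≥0∞)
    (leaves L : Finset V) (τ : ℝ≥0∞) : (V ⊕ Bool) → (V ⊕ Bool) → ℝ≥0∞
  | Sum.inl u, Sum.inl v => w u v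
  | Sum.inr true, Sum.inl v => if v ∈ leaves then τ else 0
  | Sum.inl v, Sum.inr true => if v ∈ leaves then τ else 0
  | Sum.inl v, Sum.inr false => if v ∈ L then ⊤ else 0
  | Sum.inr false, Sum.inl v => if v ∈ L then ⊤ else 0
  | Sum.inr _, Sum.inr _ => 0

/-- The value of the minimum `s`-`t` cut (= maximum `s`-`t` flow) in `T_{L,τ}`. -/
noncomputable def minSTcut {V : Type*} [Fintype V] [DecidableEq V] (w : V → V → ℝ≥0∞)
    (leaves L : Finset V) (τ : ℝ≥0∞) : ℝ≥0∞ :=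
  lamE (flowW w leaves L τ) {Sum.inr true} {Sum.inr false}

/-- Importance-weighted objective `Ψ̂^f_T(L)`. -/
noncomputable def PsiHatEf {V : Type*} [Fintype V] [DecidableEq V] (w : V → V → ℝ≥0∞)
    (f : V → ℝ≥0∞) (leaves L : Finset V) : ℝ≥0∞ :=
  ⨅ S ∈ {S : Finset V | S.Nonempty ∧ S ⊆ leaves \ L},
    lamE w S (leaves \ S) / ∑ v ∈ S, f v

/-- Capacities of the importance-weighted flow graph `T^f_{L,τ}`: all tree edges, an edge of
capacity `τ·f(v)` between the source `s = Sum.inr true` and every leaf `v`, and an edge of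
capacity `∞` between every vertex of `L` and the sink `t = Sum.inr false`. -/
noncomputable def flowWf {V : Type*} [DecidableEq V] (w : V → V → ℝ≥0∞) (f : V → ℝ≥0∞)
    (leaves L : Finset V) (τ : ℝ≥0∞) : (V ⊕ Bool) → (V ⊕ Bool) → ℝ≥0∞
  | Sum.inl u, Sum.inl v => w u v
  | Sum.inr true, Sum.inl v => if v ∈ leaves then τ * f v else 0
  | Sum.inl v, Sum.inr true => if v ∈ leaves then τ * f v else 0
  | Sum.inl v, Sum.inr false => if v ∈ L then ⊤ else 0
  | Sum.inr false, Sum.inl v => if v ∈ L then ⊤ else 0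
  | Sum.inr _, Sum.inr _ => 0

/-- The minimum `s`-`t` cut value in `T^f_{L,τ}`. -/
noncomputable def minSTcutF {V : Type*} [Fintype V] [DecidableEq V] (w : V → V → ℝ≥0∞)
    (f : V → ℝ≥0∞) (leaves L : Finset V) (τ : ℝ≥0∞) : ℝ≥0∞ :=
  lamE (flowWf w f leaves L τ) {Sum.inr true} {Sum.inr false}

/-!
An `s`-side `S'` of `T^f_{L,τ}` has cut value `w(∂(S' ∩ V)) + τ·f(leaves ∖ S') + ∞·|S' ∩ L|`.
If it is below `τ·f(leaves) = τ·f(S) + τ·f(leaves ∖ S')` with `S = S' ∩ leaves`, then `S' ∩ L = ∅`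
and `λ_T(S, leaves ∖ S) ≤ w(∂(S' ∩ V)) < τ·f(S)`; the strict inequality forces `S ≠ ∅`, so `S`
enters the infimum defining `Ψ̂^f_T(L)`.
-/

section
variable {V : Type*} [Fintype V] [DecidableEq V]

theorem lamE_le_treeCutE (c : V → V → ℝ≥0∞) {A B S : Finset V} (hA : A ⊆ S)
    (hB : Disjoint S B) : lamE c A B ≤ treeCutE c S :=
  iInf₂_le S ⟨hA, hB⟩

theorem exists_treeCutE_lt_of_lamE_lt {c : V → V → ℝ≥0∞} {A B : Finset V} {x : ℝ≥0∞}
    (h : lamE c A B < x) : ∃ S, A ⊆ S ∧ Disjoint S B ∧ treeCutE c S < x := by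
  obtain ⟨S, hS⟩ := iInf_lt_iff.mp h
  obtain ⟨⟨hA, hB⟩, hlt⟩ := iInf_lt_iff.mp hS
  exact ⟨S, hA, hB, hlt⟩

theorem PsiHatEf_lt_of_lamE_lt {w : V → V → ℝ≥0∞} {f : V → ℝ≥0∞} {leaves L S : Finset V}
    {τ : ℝ≥0∞} (hS : S ⊆ leaves \ L) (h : lamE w S (leaves \ S) < τ * ∑ v ∈ S, f v) :
    PsiHatEf w f leaves L < τ := by
  have hne : S.Nonempty := by
    rw [nonempty_iff_ne_empty]
    rintro rfl
    simp at h
  exact (iInf₂_le S ⟨hne, hS⟩).trans_lt (ENNReal.div_lt_of_lt_mul h)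

theorem treeCutE_flowWf (w : V → V → ℝ≥0∞) (f : V → ℝ≥0∞) (leaves L : Finset V) (τ : ℝ≥0∞)
    {S : Finset (V ⊕ Bool)} (hs : Sum.inr true ∈ S) (ht : Sum.inr false ∉ S) :
    treeCutE (flowWf w f leaves L τ) S =
      treeCutE w S.toLeft + τ * ∑ v ∈ leaves \ S.toLeft, f v + ∑ _v ∈ S.toLeft ∩ L, ⊤ := by
  have hright : S.toRight = {true} := by
    ext b; cases b <;> simp [hs, ht]
  have hcompl_left : Sᶜ.toLeft = S.toLeftᶜ := by ext v; simp
  have hcompl_right : Sᶜ.toRight = {false} := by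
    ext b; cases b <;> simp [hs, ht]
  simp only [treeCutE, sum_sum_eq_sum_toLeft_add_sum_toRight S,
    sum_sum_eq_sum_toLeft_add_sum_toRight Sᶜ, hright, hcompl_left, hcompl_right, sum_singleton,
    flowWf]
  rw [sum_add_distrib, sum_ite_mem, sum_ite_mem, add_zero, ← mul_sum, inter_comm _ leaves,
    ← sdiff_eq_inter_compl]
  ring

theorem filter_inl_mem_subset_sdiff {w : V → V → ℝ≥0∞} {f : V → ℝ≥0∞}
    {leaves L : Finset V} {τ : ℝ≥0∞} {S : Finset (V ⊕ Bool)} (hs : Sum.inr true ∈ S)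
    (ht : Sum.inr false ∉ S) (hcut : treeCutE (flowWf w f leaves L τ) S ≠ ⊤) :
    leaves.filter (fun v => Sum.inl v ∈ S) ⊆ leaves \ L := by
  have hdisj : Disjoint S.toLeft L := by
    rw [disjoint_iff_inter_eq_empty]
    by_contra hne
    obtain ⟨v, hv⟩ := nonempty_iff_ne_empty.mpr hne
    rw [treeCutE_flowWf w f leaves L τ hs ht, ENNReal.sum_eq_top.mpr ⟨v, hv, rfl⟩,
      add_top] at hcut
    exact hcut rfl
  intro v hv
  rw [mem_filter] at hv
  exact mem_sdiff.mpr ⟨hv.1, disjoint_left.mp hdisj (mem_toLeft.mpr hv.2)⟩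

theorem lamE_filter_inl_mem_lt {w : V → V → ℝ≥0∞} {f : V → ℝ≥0∞} {leaves L : Finset V}
    {τ : ℝ≥0∞} {S : Finset (V ⊕ Bool)} (hs : Sum.inr true ∈ S) (ht : Sum.inr false ∉ S)
    (hcut : treeCutE (flowWf w f leaves L τ) S < τ * ∑ v ∈ leaves, f v) :
    lamE w (leaves.filter (fun v => Sum.inl v ∈ S))
        (leaves \ leaves.filter (fun v => Sum.inl v ∈ S)) <
      τ * ∑ v ∈ leaves.filter (fun v => Sum.inl v ∈ S), f v := by
  set S' := leaves.filter (fun v => Sum.inl v ∈ S)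
  have hS' : S' = leaves ∩ S.toLeft := by ext; simp [S']
  have hsdiff : leaves \ S' = leaves \ S.toLeft := by rw [hS', sdiff_inter_self_left]
  have hsplit :
      τ * ∑ v ∈ leaves, f v = τ * ∑ v ∈ S', f v + τ * ∑ v ∈ leaves \ S.toLeft, f v := by
    rw [← hsdiff, ← mul_add, add_comm, sum_sdiff (filter_subset _ _)]
  rw [treeCutE_flowWf w f leaves L τ hs ht, hsplit] at hcut
  have hw : treeCutE w S.toLeft < τ * ∑ v ∈ S', f v :=
    lt_of_add_lt_add_right (le_self_add.trans_lt hcut)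
  refine (lamE_le_treeCutE w ?_ ?_).trans_lt hw
  · rw [hS']
    exact inter_subset_right
  · rw [hsdiff]
    exact disjoint_sdiff

end

theorem stmt16_general {V : Type*} [Fintype V] [DecidableEq V]
    (w : V → V → ℝ≥0∞)
    (leaves : Finset V)
    (f : V → ℝ≥0∞)
    (L : Finset V) (τ : ℝ≥0∞)
    (h : minSTcutF w f leaves L τ < τ * ∑ v ∈ leaves, f v) :
    PsiHatEf w f leaves L < τ ∧
    ∀ Sext : Finset (V ⊕ Bool),
      Sum.inr true ∈ Sext → Sum.inr false ∉ Sext →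
      treeCutE (flowWf w f leaves L τ) Sext = minSTcutF w f leaves L τ →
      (leaves.filter (fun v => Sum.inl v ∈ Sext)) ⊆ leaves \ L ∧
      lamE w (leaves.filter (fun v => Sum.inl v ∈ Sext))
          (leaves \ leaves.filter (fun v => Sum.inl v ∈ Sext)) <
        τ * ∑ v ∈ leaves.filter (fun v => Sum.inl v ∈ Sext), f v := by
  refine ⟨?_, fun Sext hs ht hmin => ⟨filter_inl_mem_subset_sdiff hs ht (hmin ▸ h).ne_top,
    lamE_filter_inl_mem_lt hs ht (hmin ▸ h)⟩⟩
  obtain ⟨Sext, hs, ht, hcut⟩ := exists_treeCutE_lt_of_lamE_lt h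
  rw [singleton_subset_iff] at hs
  rw [disjoint_singleton_right] at ht
  exact PsiHatEf_lt_of_lamE_lt (filter_inl_mem_subset_sdiff hs ht hcut.ne_top)
    (lamE_filter_inl_mem_lt hs ht hcut)

/-- if the minimum `s`-`t` cut in `T^f_{L,τ}` is strictly less than
`τ·Σ_{v ∈ leaves(T)} f(v)`, then `Ψ̂^f_T(L) < τ`; moreover, for any `s`-side `Sext` of a
minimum cut, the set `S = Sext ∩ leaves(T)` witnesses this: `S ⊆ leaves(T)∖L` and
`λ_T(S, leaves(T)∖S) < τ·Σ_{v∈S} f(v)`. -/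
theorem stmt16 {V : Type*} [Fintype V] [DecidableEq V]
    (T : SimpleGraph V) [DecidableRel T.Adj] (hT : T.IsTree)
    (w : V → V → ℝ≥0∞) (hsymm : ∀ u v, w u v = w v u)
    (hsupp : ∀ u v, w u v ≠ 0 → T.Adj u v) (hfin : ∀ u v, w u v ≠ ⊤)
    (leaves : Finset V) (hleaves : leaves = Finset.univ.filter (fun x => T.degree x = 1))
    (f : V → ℝ≥0∞) (hf : ∀ v, 0 < f v) (hf' : ∀ v, f v ≠ ⊤)
    (L : Finset V) (hL : L ⊆ leaves) (τ : ℝ≥0∞) (hτ : τ ≠ ⊤)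
    (h : minSTcutF w f leaves L τ < τ * ∑ v ∈ leaves, f v) :
    PsiHatEf w f leaves L < τ ∧
    ∀ Sext : Finset (V ⊕ Bool),
      Sum.inr true ∈ Sext → Sum.inr false ∉ Sext →
      treeCutE (flowWf w f leaves L τ) Sext = minSTcutF w f leaves L τ →
      (leaves.filter (fun v => Sum.inl v ∈ Sext)) ⊆ leaves \ L ∧
      lamE w (leaves.filter (fun v => Sum.inl v ∈ Sext))
          (leaves \ leaves.filter (fun v => Sum.inl v ∈ Sext)) <
        τ * ∑ v ∈ leaves.filter (fun v => Sum.inl v ∈ Sext), f v :=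
  stmt16_general w leaves f L τ h
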